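/- Let n ≥ 1 be an integer and 1 ≤ j ≤ n. Define the angular derivative ∂K/∂θ_j at (w,ξ) ∈ 𝔻ⁿ × ℝⁿ as the derivative at t = 0 of t ↦ K(w_1, …, e^{it}·w_j, …, w_n, ξ), let ∂/∂ξ_j denote partial differentiation in ξ_j, and adopt the convention ∂K/∂ξ_{n+1} = 0. Then at every point (w,ξ) ∈ 𝔻ⁿ × ℝⁿ with w_j ≠ 0 the coupling equation C_j K = 0 holds, where C_j K = ∂K/∂θ_j + ∂K/∂ξ_j − ∂K/∂ξ_{j+1}. -/

import Mathlib

/-- Backward recurrence: `backRec [(w₁,ξ₁),…,(wₙ,ξₙ)] = Ψ_{e^{iξ₁}}^{w₁} ∘ ⋯ ∘ Ψ_{e^{iξₙ}}^{wₙ}(0)`,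
where `Ψ_z^w(v) = z(v + w̄)/(1 + wv)`. -/
noncomputable def backRec : List (ℂ × ℝ) → ℂ
  | [] => 0
  | (w, ξ) :: rest =>
      Complex.exp (Complex.I * (ξ : ℂ)) * (backRec rest + (starRingEnd ℂ) w) /
        (1 + w * backRec rest)

/-- `K(w,ξ) = Ψ_{e^{iξ₁}}^{w₁} ∘ ⋯ ∘ Ψ_{e^{iξₙ}}^{wₙ}(0)`. -/
noncomputable def Kfun (n : ℕ) (w : Fin n → ℂ) (ξ : Fin n → ℝ) : ℂ :=
  backRec (List.ofFn fun i => (w i, ξ i))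

open Complex

lemma denom_ne {w v : ℂ} (hw : ‖w‖ < 1) (hv : ‖v‖ ≤ 1) :
    1 + w * v ≠ 0 := by
  intro h
  have h1 : w * v = -1 := by linear_combination h
  have h2 : ‖w * v‖ = 1 := by simp [h1]
  rw [norm_mul] at h2
  nlinarith [norm_nonneg w, norm_nonneg v]

lemma abs_backRec_le : ∀ (L : List (ℂ × ℝ)), (∀ p ∈ L, ‖p.1‖ < 1) →
    ‖backRec L‖ ≤ 1
  | [], _ => by simp [backRec]
  | (w, ξ) :: rest, h => by
    have hw : ‖w‖ < 1 := h (w, ξ) (by simp)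
    have hv : ‖backRec rest‖ ≤ 1 :=
      abs_backRec_le rest (fun p hp => h p (by simp [hp]))
    set v := backRec rest with hvdef
    have hden := denom_ne hw hv
    have hnum : ‖v + (starRingEnd ℂ) w‖ ≤ ‖1 + w * v‖ := by
      rw [Complex.norm_def, Complex.norm_def]
      apply Real.sqrt_le_sqrt
      have e1 : Complex.normSq (v + (starRingEnd ℂ) w) =
          Complex.normSq v + Complex.normSq w + 2 * (v * w).re := by
        rw [Complex.normSq_add]
        simp [Complex.normSq_conj]
      have e2 : Complex.normSq (1 + w * v) =
          1 + Complex.normSq w * Complex.normSq v + 2 * (w * v).re := by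
        rw [Complex.normSq_add]
        simp [Complex.normSq_mul, Complex.conj_re]
      have e3 : (v * w).re = (w * v).re := by rw [mul_comm]
      have hv' : Complex.normSq v ≤ 1 := by
        have := Complex.sq_norm v
        nlinarith [norm_nonneg v]
      have hw' : Complex.normSq w ≤ 1 := by
        have := Complex.sq_norm w
        nlinarith [norm_nonneg w]
      rw [e1, e2, e3]
      nlinarith [Complex.normSq_nonneg v, Complex.normSq_nonneg w]
    have habs : ‖Complex.exp (Complex.I * (ξ : ℂ))‖ = 1 := by
      simp [Complex.norm_exp]
    rw [backRec, norm_div, norm_mul, habs, one_mul, div_le_one]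
    · exact hnum
    · exact (norm_pos_iff.mpr hden)

lemma abs_Kfun_le (n : ℕ) (w : Fin n → ℂ) (hw : ∀ i, ‖w i‖ < 1)
    (ξ : Fin n → ℝ) : ‖Kfun n w ξ‖ ≤ 1 := by
  apply abs_backRec_le
  intro p hp
  rw [List.mem_ofFn] at hp
  obtain ⟨i, rfl⟩ := hp
  exact hw i

lemma Kfun_succ (n : ℕ) (w : Fin (n+1) → ℂ) (ξ : Fin (n+1) → ℝ) :
    Kfun (n+1) w ξ =
      Complex.exp (Complex.I * (ξ 0 : ℂ)) *
        (Kfun n (fun i => w i.succ) (fun i => ξ i.succ) + (starRingEnd ℂ) (w 0)) /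
        (1 + w 0 * Kfun n (fun i => w i.succ) (fun i => ξ i.succ)) := by
  simp [Kfun, List.ofFn_succ, backRec]

lemma update_succ_comp {α : Type*} {n : ℕ} (f : Fin (n+1) → α) (k : Fin n) (a : α) :
    (fun i : Fin n => Function.update f k.succ a i.succ) =
      Function.update (fun i : Fin n => f i.succ) k a := by
  funext i
  rcases eq_or_ne i k with rfl | h
  · simp
  · rw [Function.update_of_ne h,
      Function.update_of_ne (fun hc => h (Fin.succ_injective _ hc))]

/-- derivative of `t ↦ exp(I t)` as a real-variable function. -/
lemma hasDerivAt_expI (t₀ : ℝ) :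
    HasDerivAt (fun t : ℝ => Complex.exp (Complex.I * (t : ℂ)))
      (Complex.I * Complex.exp (Complex.I * (t₀ : ℂ))) t₀ := by
  have h1 : HasDerivAt (fun t : ℝ => ((t : ℂ))) 1 t₀ := by
    simpa using (hasDerivAt_id t₀).ofReal_comp
  have h2 : HasDerivAt (fun t : ℝ => Complex.I * (t : ℂ)) Complex.I t₀ := by
    simpa using h1.const_mul Complex.I
  have h3 := (Complex.hasDerivAt_exp (Complex.I * (t₀ : ℂ))).scomp t₀ h2
  simpa [smul_eq_mul, mul_comm, Function.comp_def] using h3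

lemma hasDerivAt_expnegI (t₀ : ℝ) :
    HasDerivAt (fun t : ℝ => Complex.exp (-(Complex.I * (t : ℂ))))
      (-Complex.I * Complex.exp (-(Complex.I * (t₀ : ℂ)))) t₀ := by
  have h1 : HasDerivAt (fun t : ℝ => ((t : ℂ))) 1 t₀ := by
    simpa using (hasDerivAt_id t₀).ofReal_comp
  have h2 : HasDerivAt (fun t : ℝ => -Complex.I * (t : ℂ)) (-Complex.I) t₀ := by
    simpa using h1.const_mul (-Complex.I)
  have h2' : HasDerivAt (fun t : ℝ => -(Complex.I * (t : ℂ))) (-Complex.I) t₀ := by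
    simpa [neg_mul] using h2
  have h3 := (Complex.hasDerivAt_exp (-(Complex.I * (t₀ : ℂ)))).scomp t₀ h2'
  simpa [smul_eq_mul, mul_comm, Function.comp_def] using h3

/-- derivative of the Möbius step map in the `v` variable. -/
lemma hasDerivAt_step (w : ℂ) (ξ : ℝ) (v : ℂ) (h : 1 + w * v ≠ 0) :
    HasDerivAt (fun z : ℂ => Complex.exp (Complex.I * (ξ : ℂ)) * (z + (starRingEnd ℂ) w) /
        (1 + w * z))
      ((Complex.exp (Complex.I * (ξ : ℂ)) * (1 + w * v) -
          Complex.exp (Complex.I * (ξ : ℂ)) * (v + (starRingEnd ℂ) w) * w) /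
        (1 + w * v) ^ 2) v := by
  have hnum : HasDerivAt
      (fun z : ℂ => Complex.exp (Complex.I * (ξ : ℂ)) * (z + (starRingEnd ℂ) w))
      (Complex.exp (Complex.I * (ξ : ℂ))) v := by
    simpa using ((hasDerivAt_id v).add_const ((starRingEnd ℂ) w)).const_mul
      (Complex.exp (Complex.I * (ξ : ℂ)))
  have hden : HasDerivAt (fun z : ℂ => 1 + w * z) w v := by
    simpa using ((hasDerivAt_id v).const_mul w).const_add 1
  exact hnum.div hden h

/-- derivative in the first angle `ξ₀`. -/
lemma hasDerivAt_K_xi0 (n : ℕ) (w : Fin (n+1) → ℂ) (ξ : Fin (n+1) → ℝ) :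
    HasDerivAt (fun t : ℝ => Kfun (n+1) w (Function.update ξ 0 t))
      (Complex.I * Kfun (n+1) w ξ) (ξ 0) := by
  set v := Kfun n (fun i => w i.succ) (fun i => ξ i.succ) with hv
  have heq : (fun t : ℝ => Kfun (n+1) w (Function.update ξ 0 t)) =
      fun t : ℝ => Complex.exp (Complex.I * (t : ℂ)) *
        ((v + (starRingEnd ℂ) (w 0)) / (1 + w 0 * v)) := by
    funext t
    rw [Kfun_succ]
    have h1 : (fun i : Fin n => Function.update ξ 0 t i.succ) = fun i => ξ i.succ := by
      funext i
      exact Function.update_of_ne (Fin.succ_ne_zero i) _ _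
    rw [Function.update_self, h1, mul_div_assoc]
  rw [heq]
  have := (hasDerivAt_expI (ξ 0)).mul_const ((v + (starRingEnd ℂ) (w 0)) / (1 + w 0 * v))
  have hK : Kfun (n+1) w ξ = Complex.exp (Complex.I * ((ξ 0 : ℝ) : ℂ)) *
      ((v + (starRingEnd ℂ) (w 0)) / (1 + w 0 * v)) := by
    rw [Kfun_succ, mul_div_assoc]
  rw [hK]
  refine this.congr_deriv ?_
  ring

theorem Kfun_coupling_key : ∀ (n : ℕ) (w : Fin n → ℂ), (∀ i, ‖w i‖ < 1) →
    ∀ (ξ : Fin n → ℝ) (j : Fin n),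
    ∃ a b c : ℂ,
      HasDerivAt (fun t : ℝ =>
        Kfun n (Function.update w j (Complex.exp (Complex.I * (t : ℂ)) * w j)) ξ) a 0 ∧
      HasDerivAt (fun t : ℝ => Kfun n w (Function.update ξ j t)) b (ξ j) ∧
      (∀ h : (j : ℕ) + 1 < n,
        HasDerivAt (fun t : ℝ => Kfun n w (Function.update ξ ⟨(j : ℕ) + 1, h⟩ t)) c
          (ξ ⟨(j : ℕ) + 1, h⟩)) ∧
      (¬ ((j : ℕ) + 1 < n) → c = 0) ∧
      a + b - c = 0 := by
  intro n
  induction n with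
  | zero => exact fun w _ ξ j => absurd j.isLt (by omega)
  | succ n IH =>
    intro w hw ξ j
    set w' : Fin n → ℂ := fun i => w i.succ with hw'def
    set ξ' : Fin n → ℝ := fun i => ξ i.succ with hξ'def
    have hw' : ∀ i, ‖w' i‖ < 1 := fun i => hw i.succ
    set v := Kfun n w' ξ' with hvdef
    have hvle : ‖v‖ ≤ 1 := abs_Kfun_le n w' hw' ξ'
    have hden : 1 + w 0 * v ≠ 0 := denom_ne (hw 0) hvle
    induction j using Fin.cases with
    | zero =>
      -- j = 0 case
      set e := Complex.exp (Complex.I * ((ξ 0 : ℝ) : ℂ)) with hedef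
      -- θ-derivative
      have ha : HasDerivAt (fun t : ℝ =>
          Kfun (n+1) (Function.update w 0 (Complex.exp (Complex.I * (t : ℂ)) * w 0)) ξ)
          (((e * (-Complex.I * (starRingEnd ℂ) (w 0))) * (1 + w 0 * v) -
            e * (v + (starRingEnd ℂ) (w 0)) * (Complex.I * (w 0 * v))) /
            (1 + w 0 * v) ^ 2) 0 := by
        have heq : (fun t : ℝ =>
            Kfun (n+1) (Function.update w 0 (Complex.exp (Complex.I * (t : ℂ)) * w 0)) ξ) =
            fun t : ℝ => (e * (v + Complex.exp (-(Complex.I * (t : ℂ))) *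
              (starRingEnd ℂ) (w 0))) /
              (1 + Complex.exp (Complex.I * (t : ℂ)) * (w 0 * v)) := by
          funext t
          rw [Kfun_succ]
          have h1 : (fun i : Fin n =>
              Function.update w 0 (Complex.exp (Complex.I * (t : ℂ)) * w 0) i.succ) = w' := by
            funext i
            exact Function.update_of_ne (Fin.succ_ne_zero i) _ _
          rw [Function.update_self, h1]
          have hc : (starRingEnd ℂ) (Complex.exp (Complex.I * (t : ℂ)) * w 0) =
              Complex.exp (-(Complex.I * (t : ℂ))) * (starRingEnd ℂ) (w 0) := by
            rw [map_mul, ← Complex.exp_conj]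
            congr 2
            simp [Complex.conj_ofReal]
          rw [hc, ← hξ'def, ← hvdef, ← hedef]
          ring_nf
        rw [heq]
        have hnum : HasDerivAt (fun t : ℝ => e * (v + Complex.exp (-(Complex.I * (t : ℂ))) *
            (starRingEnd ℂ) (w 0))) (e * (-Complex.I * (starRingEnd ℂ) (w 0))) 0 := by
          have := ((hasDerivAt_expnegI 0).mul_const ((starRingEnd ℂ) (w 0))).const_add v
          have h2 := this.const_mul e
          simpa using h2
        have hden' : HasDerivAt (fun t : ℝ =>
            1 + Complex.exp (Complex.I * (t : ℂ)) * (w 0 * v)) (Complex.I * (w 0 * v)) 0 := by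
          have := ((hasDerivAt_expI 0).mul_const (w 0 * v)).const_add 1
          simpa using this
        have hd0 : (1 : ℂ) + Complex.exp (Complex.I * ((0:ℝ) : ℂ)) * (w 0 * v) ≠ 0 := by
          simpa [mul_assoc] using hden
        have := hnum.div hden' hd0
        simpa [mul_assoc, Pi.div_def] using this
      -- ξ₀-derivative
      have hb : HasDerivAt (fun t : ℝ => Kfun (n+1) w (Function.update ξ 0 t))
          (Complex.I * Kfun (n+1) w ξ) (ξ 0) := hasDerivAt_K_xi0 n w ξ
      have hKval : Kfun (n+1) w ξ = e * (v + (starRingEnd ℂ) (w 0)) / (1 + w 0 * v) := by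
        rw [Kfun_succ]
      refine ⟨_, Complex.I * Kfun (n+1) w ξ,
        (Complex.I * v) * ((e * (1 + w 0 * v) - e * (v + (starRingEnd ℂ) (w 0)) * w 0) /
          (1 + w 0 * v) ^ 2), ha, hb, ?_, ?_, ?_⟩
      · intro h
        have hn : 0 < n := by simp only [Fin.val_zero] at h; omega
        -- inner curve: update at index 1 = Fin.succ 0
        have hidx : (⟨(((0 : Fin (n+1)) : ℕ)) + 1, h⟩ : Fin (n+1)) =
            Fin.succ ⟨0, hn⟩ := rfl
        rw [hidx]
        have heq : (fun t : ℝ => Kfun (n+1) w (Function.update ξ (Fin.succ ⟨0, hn⟩) t)) =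
            (fun z : ℂ => e * (z + (starRingEnd ℂ) (w 0)) / (1 + w 0 * z)) ∘
              (fun t : ℝ => Kfun n w' (Function.update ξ' ⟨0, hn⟩ t)) := by
          funext t
          simp only [Function.comp]
          rw [Kfun_succ]
          rw [Function.update_of_ne (Fin.succ_ne_zero _).symm, update_succ_comp]
        rw [heq]
        have hg : HasDerivAt (fun z : ℂ => e * (z + (starRingEnd ℂ) (w 0)) / (1 + w 0 * z))
            ((e * (1 + w 0 * v) - e * (v + (starRingEnd ℂ) (w 0)) * w 0) /
              (1 + w 0 * v) ^ 2) v := hasDerivAt_step (w 0) (ξ 0) v hden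
        -- generalize n = m+1 to use hasDerivAt_K_xi0
        obtain ⟨m, rfl⟩ : ∃ m, n = m + 1 := ⟨n - 1, by omega⟩
        have hinner : HasDerivAt (fun t : ℝ => Kfun (m+1) w' (Function.update ξ' ⟨0, hn⟩ t))
            (Complex.I * v) (ξ' ⟨0, hn⟩) := by
          have h0 : (⟨0, hn⟩ : Fin (m+1)) = 0 := rfl
          rw [h0]
          exact hasDerivAt_K_xi0 m w' ξ'
        have hgv : HasDerivAt (fun z : ℂ => e * (z + (starRingEnd ℂ) (w 0)) / (1 + w 0 * z))
            ((e * (1 + w 0 * v) - e * (v + (starRingEnd ℂ) (w 0)) * w 0) /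
              (1 + w 0 * v) ^ 2)
            (Kfun (m+1) w' (Function.update ξ' ⟨0, hn⟩ (ξ' ⟨0, hn⟩))) := by
          rwa [Function.update_eq_self]
        have hξval : ξ (Fin.succ ⟨0, hn⟩) = ξ' ⟨0, hn⟩ := rfl
        rw [hξval]
        have := hgv.scomp (ξ' ⟨0, hn⟩) hinner
        simpa [smul_eq_mul] using this
      · intro h
        have hn : n = 0 := by simp only [Fin.val_zero] at h; omega
        subst hn
        have hv0 : v = 0 := by simp [hvdef, Kfun, backRec, List.ofFn]
        rw [hv0]
        ring
      · rw [hKval]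
        field_simp
        ring
    | succ j' =>
      -- inductive step
      obtain ⟨a', b', c', ha', hb', hc', hc0', hsum'⟩ := IH w' hw' ξ' j'
      set g : ℂ → ℂ := fun z =>
        Complex.exp (Complex.I * ((ξ 0 : ℝ) : ℂ)) * (z + (starRingEnd ℂ) (w 0)) /
          (1 + w 0 * z) with hgdef
      set d : ℂ := (Complex.exp (Complex.I * ((ξ 0 : ℝ) : ℂ)) * (1 + w 0 * v) -
          Complex.exp (Complex.I * ((ξ 0 : ℝ) : ℂ)) * (v + (starRingEnd ℂ) (w 0)) * w 0) /
          (1 + w 0 * v) ^ 2 with hddef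
      have hg : HasDerivAt g d v := hasDerivAt_step (w 0) (ξ 0) v hden
      refine ⟨a' * d, b' * d, c' * d, ?_, ?_, ?_, ?_, ?_⟩
      · -- θ-derivative
        have heq : (fun t : ℝ =>
            Kfun (n+1) (Function.update w j'.succ
              (Complex.exp (Complex.I * (t : ℂ)) * w j'.succ)) ξ) =
            g ∘ (fun t : ℝ =>
              Kfun n (Function.update w' j' (Complex.exp (Complex.I * (t : ℂ)) * w' j')) ξ') := by
          funext t
          simp only [Function.comp]
          rw [Kfun_succ, Function.update_of_ne (Fin.succ_ne_zero _).symm, update_succ_comp]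
        rw [heq]
        have h0 : Kfun n (Function.update w' j'
            (Complex.exp (Complex.I * ((0:ℝ) : ℂ)) * w' j')) ξ' = v := by
          norm_num [Function.update_eq_self, hvdef]
        have hgv : HasDerivAt g d (Kfun n (Function.update w' j'
            (Complex.exp (Complex.I * ((0:ℝ) : ℂ)) * w' j')) ξ') := by rwa [h0]
        have := hgv.scomp 0 ha'
        simpa [smul_eq_mul, mul_comm] using this
      · -- ξ_j derivative
        have heq : (fun t : ℝ => Kfun (n+1) w (Function.update ξ j'.succ t)) =
            g ∘ (fun t : ℝ => Kfun n w' (Function.update ξ' j' t)) := by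
          funext t
          simp only [Function.comp]
          rw [Kfun_succ, Function.update_of_ne (Fin.succ_ne_zero _).symm, update_succ_comp]
        rw [heq]
        have hgv : HasDerivAt g d (Kfun n w' (Function.update ξ' j' (ξ' j'))) := by
          rwa [Function.update_eq_self]
        have hξval : ξ j'.succ = ξ' j' := rfl
        rw [hξval]
        have := hgv.scomp (ξ' j') hb'
        simpa [smul_eq_mul, mul_comm] using this
      · -- ξ_{j+1} derivative
        intro h
        have h' : (j' : ℕ) + 1 < n := by
          simpa [Fin.val_succ] using Nat.lt_of_succ_lt_succ (by simpa [Fin.val_succ] using h)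
        have hidx : (⟨((j'.succ : ℕ)) + 1, h⟩ : Fin (n+1)) =
            Fin.succ ⟨(j' : ℕ) + 1, h'⟩ := rfl
        rw [hidx]
        have heq : (fun t : ℝ =>
            Kfun (n+1) w (Function.update ξ (Fin.succ ⟨(j' : ℕ) + 1, h'⟩) t)) =
            g ∘ (fun t : ℝ => Kfun n w' (Function.update ξ' ⟨(j' : ℕ) + 1, h'⟩ t)) := by
          funext t
          simp only [Function.comp]
          rw [Kfun_succ, Function.update_of_ne (Fin.succ_ne_zero _).symm, update_succ_comp]
        rw [heq]
        have hgv : HasDerivAt g d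
            (Kfun n w' (Function.update ξ' ⟨(j' : ℕ) + 1, h'⟩ (ξ' ⟨(j' : ℕ) + 1, h'⟩))) := by
          rwa [Function.update_eq_self]
        have hξval : ξ (Fin.succ ⟨(j' : ℕ) + 1, h'⟩) = ξ' ⟨(j' : ℕ) + 1, h'⟩ := rfl
        rw [hξval]
        have := hgv.scomp (ξ' ⟨(j' : ℕ) + 1, h'⟩) (hc' h')
        simpa [smul_eq_mul, mul_comm] using this
      · intro h
        have h' : ¬ ((j' : ℕ) + 1 < n) := by
          intro hc
          exact h (by simpa [Fin.val_succ] using Nat.succ_lt_succ hc)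
        rw [hc0' h']
        ring
      · linear_combination d * hsum'

/-- The coupling equation `C_j K = 0`: `∂K/∂θ_j + ∂K/∂ξ_j - ∂K/∂ξ_{j+1} = 0`, where
`∂K/∂θ_j` is the derivative at `t = 0` of `t ↦ K(w₁,…,e^{it}w_j,…,wₙ,ξ)` and with the
convention `∂K/∂ξ_{n+1} = 0`. -/
theorem Kfun_coupling_equation (n : ℕ) (hn : 1 ≤ n) (j : Fin n)
    (w : Fin n → ℂ) (hw : ∀ i, ‖w i‖ < 1) (hwj : w j ≠ 0)
    (ξ : Fin n → ℝ) :
    deriv (fun t : ℝ =>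
        Kfun n (Function.update w j (Complex.exp (Complex.I * (t : ℂ)) * w j)) ξ) 0 +
      deriv (fun t : ℝ => Kfun n w (Function.update ξ j t)) (ξ j) -
      (if h : (j : ℕ) + 1 < n then
          deriv (fun t : ℝ => Kfun n w (Function.update ξ ⟨(j : ℕ) + 1, h⟩ t))
            (ξ ⟨(j : ℕ) + 1, h⟩)
        else 0) = 0 := by
  obtain ⟨a, b, c, ha, hb, hc, hc0, hsum⟩ := Kfun_coupling_key n w hw ξ j
  rw [ha.deriv, hb.deriv]
  split_ifs with h
  · rw [(hc h).deriv]; exact hsum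
  · rw [hc0 h] at hsum; simpa using hsum
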